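/- arXiv:1112.0154 — 2 statements merged into one kernel-verified Lean document; each statement's English description precedes it below -/
import Mathlib

section
/- Let A ≥ B ≥ 0 be real constants and a ∈ L^∞(ℝ_+) with a ≥ 0. If η ∈ H²(ℝ_+) is a solution of η'''' − 2A η'' + B² η = a(s) η on ℝ_+ = (0,∞) with η(0) = η'(0) = η''(0) = 0, then η ≡ 0 on ℝ_+. -/
/-!
Let `γ = η'''(0)`. If `γ = 0`, then `η, η', η'', η'''` all vanish at `0`; since `a` is bounded,
the energy `E = η² + η'² + η''² + η'''²` satisfies `E' ≤ K E`, so `E ≡ 0` by Gronwall.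

If `γ > 0` (the case `γ < 0` follows by replacing `η` with `-η`), factor
`X² - 2AX + B² = (X - p)(X - q)` with `p, q ≥ 0`. Then `w = η'' - qη` turns the equation into the
system `η'' = w + qη`, `w'' = pw + aη`, all of whose coefficients are nonnegative. Starting from
`η = η' = w = 0` and `w' = γ > 0`, the quantity `w'` can never reach `0`, because as long as
`w' ≥ 0` we get `w ≥ 0`, hence `η ≥ 0`, hence `w'' ≥ 0`. So `w' ≥ γ`, and integrating three times
gives `η(s) ≥ γ s³ / 6`, which is impossible for `η ∈ L²`.
-/

open MeasureTheory

open Set Filter Real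

theorem ContDiff.hasDerivAt_iteratedDeriv {𝕜 F : Type*} [NontriviallyNormedField 𝕜]
    [NormedAddCommGroup F] [NormedSpace 𝕜 F] {f : 𝕜 → F} {n : WithTop ℕ∞} {k : ℕ}
    (hf : ContDiff 𝕜 n f) (hk : k < n) (x : 𝕜) :
    HasDerivAt (iteratedDeriv k f) (iteratedDeriv (k + 1) f x) x := by
  rw [iteratedDeriv_succ]
  exact (hf.differentiable_iteratedDeriv k hk x).hasDerivAt

theorem le_of_hasDerivAt_le {f g f' g' : ℝ → ℝ} {a b : ℝ} (hf : ∀ x, HasDerivAt f (f' x) x)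
    (hg : ∀ x, HasDerivAt g (g' x) x) (hab : a ≤ b) (ha : f a ≤ g a)
    (h : ∀ x ∈ Ioo a b, f' x ≤ g' x) : f b ≤ g b := by
  have hmono : MonotoneOn (fun x => g x - f x) (Icc a b) :=
    monotoneOn_of_hasDerivWithinAt_nonneg (convex_Icc a b)
      (fun x _ => ((hg x).sub (hf x)).continuousAt.continuousWithinAt)
      (fun x _ => ((hg x).sub (hf x)).hasDerivWithinAt)
      (fun x hx => sub_nonneg.2 (h x (by rwa [interior_Icc] at hx)))
  linarith [hmono (left_mem_Icc.2 hab) (right_mem_Icc.2 hab) hab]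

theorem nonneg_of_hasDerivAt_of_mul_le {y y' : ℝ → ℝ} {c a b : ℝ}
    (hy : ∀ x, HasDerivAt y (y' x) x) (hab : a ≤ b) (ha : 0 ≤ y a)
    (h : ∀ x ∈ Ioo a b, c * y x ≤ y' x) : 0 ≤ y b := by
  have hz : ∀ x, HasDerivAt (fun x => exp (-c * x) * y x)
      (exp (-c * x) * (y' x - c * y x)) x := fun x =>
    (((hasDerivAt_id' x).const_mul (-c)).exp.fun_mul (hy x)).congr_deriv (by ring)
  have := le_of_hasDerivAt_le (fun _ => hasDerivAt_const _ 0) hz hab (by positivity)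
    fun x hx => mul_nonneg (exp_pos _).le (sub_nonneg.2 (h x hx))
  exact (mul_nonneg_iff_of_pos_left (exp_pos _)).1 this

theorem nonneg_of_hasDerivAt_of_mul_le_secondDeriv {f f' f'' : ℝ → ℝ} {q a b : ℝ} (hq : 0 ≤ q)
    (hf : ∀ x, HasDerivAt f (f' x) x) (hf' : ∀ x, HasDerivAt f' (f'' x) x) (hab : a ≤ b)
    (ha : f a = 0) (ha' : 0 ≤ f' a) (h : ∀ x ∈ Ioo a b, q * f x ≤ f'' x) : 0 ≤ f b := by
  have hr : √q * √q = q := mul_self_sqrt hq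
  -- `f'' - q f = (D + √q) (D - √q) f`
  have hφ : ∀ x ∈ Ioo a b, √q * f x ≤ f' x := fun x hx => by
    have := nonneg_of_hasDerivAt_of_mul_le (y := fun x => f' x - √q * f x) (c := -√q)
      (fun x => (hf' x).sub ((hf x).const_mul √q))
      hx.1.le (by simpa [ha] using ha')
      fun z hz => by linear_combination h z ⟨hz.1, hz.2.trans hx.2⟩ + f z * hr
    linarith
  exact nonneg_of_hasDerivAt_of_mul_le hf hab ha.ge hφ

theorem not_memLp_Ioi_of_eventually_le {f : ℝ → ℝ} {c : ℝ} (hc : 0 < c)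
    (hf : ∀ᶠ x in atTop, c ≤ f x) (t : ℝ) {p : ENNReal} (hp : p ≠ 0) (hp' : p ≠ ⊤) :
    ¬ MemLp f p (volume.restrict (Ioi t)) := by
  intro hfp
  obtain ⟨T, hT⟩ := (hf.and (eventually_ge_atTop t)).exists_forall_of_atTop
  have hfT : MemLp f p (volume.restrict (Ioi T)) :=
    hfp.mono_measure (Measure.restrict_mono (Ioi_subset_Ioi (hT T le_rfl).2) le_rfl)
  have hcT : MemLp (fun _ => c) p (volume.restrict (Ioi T)) := by
    refine hfT.of_le aestronglyMeasurable_const ((ae_restrict_iff' measurableSet_Ioi).2 ?_)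
    filter_upwards with x hx
    rw [norm_of_nonneg hc.le]
    exact (hT x (le_of_lt hx)).1.trans (le_norm_self _)
  simp [memLp_const_iff hp hp', hc.ne'] at hcT

theorem exists_nonneg_add_eq_mul_eq {A B : ℝ} (hB : 0 ≤ B) (hAB : B ≤ A) :
    ∃ p q : ℝ, 0 ≤ p ∧ 0 ≤ q ∧ p + q = 2 * A ∧ p * q = B ^ 2 := by
  have hd : √(A ^ 2 - B ^ 2) ^ 2 = A ^ 2 - B ^ 2 := sq_sqrt (by nlinarith)
  have hdA : √(A ^ 2 - B ^ 2) ≤ A := by nlinarith [sqrt_nonneg (A ^ 2 - B ^ 2)]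
  exact ⟨A + √(A ^ 2 - B ^ 2), A - √(A ^ 2 - B ^ 2),
    by linarith [sqrt_nonneg (A ^ 2 - B ^ 2)], by linarith, by ring, by linear_combination -hd⟩

theorem mul_two_mul_le_abs_mul_add_sq (c x y : ℝ) : c * (2 * x * y) ≤ |c| * (x ^ 2 + y ^ 2) := by
  rcases abs_cases c with ⟨h, hc⟩ | ⟨h, hc⟩ <;> rw [h]
  · nlinarith [mul_nonneg hc (sq_nonneg (x - y))]
  · nlinarith [mul_nonneg (neg_nonneg.2 hc.le) (sq_nonneg (x + y))]

theorem two_mul_energy_le (u₀ u₁ u₂ u₃ c₀ c₂ : ℝ) :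
    2 * (u₀ * u₁ + u₁ * u₂ + u₂ * u₃ + u₃ * (c₂ * u₂ + c₀ * u₀)) ≤
      (2 + (|c₀| + |c₂|)) * (u₀ ^ 2 + u₁ ^ 2 + u₂ ^ 2 + u₃ ^ 2) := by
  linarith [two_mul_le_add_sq u₀ u₁, two_mul_le_add_sq u₁ u₂, two_mul_le_add_sq u₂ u₃,
    mul_two_mul_le_abs_mul_add_sq c₂ u₃ u₂, mul_two_mul_le_abs_mul_add_sq c₀ u₃ u₀,
    sq_nonneg u₀, sq_nonneg u₁, sq_nonneg u₂, sq_nonneg u₃,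
    mul_nonneg (abs_nonneg c₀) (sq_nonneg u₁), mul_nonneg (abs_nonneg c₀) (sq_nonneg u₂),
    mul_nonneg (abs_nonneg c₂) (sq_nonneg u₀), mul_nonneg (abs_nonneg c₂) (sq_nonneg u₁)]

theorem eq_zero_of_iteratedDeriv_four_eq {η c₀ c₂ : ℝ → ℝ} {C : ℝ} (hη : ContDiff ℝ 4 η)
    (hc : ∀ s > 0, |c₀ s| + |c₂ s| ≤ C)
    (hode : ∀ s > 0, iteratedDeriv 4 η s = c₂ s * iteratedDeriv 2 η s + c₀ s * η s)
    (h0 : ∀ k < 4, iteratedDeriv k η 0 = 0) : ∀ s ≥ 0, η s = 0 := by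
  set E : ℝ → ℝ := fun s => ∑ k ∈ Finset.range 4, iteratedDeriv k η s ^ 2
  have hE : ∀ s, HasDerivAt E
      (∑ k ∈ Finset.range 4, 2 * iteratedDeriv k η s * iteratedDeriv (k + 1) η s) s :=
    fun s => HasDerivAt.fun_sum fun k hk => by
      simpa using (hη.hasDerivAt_iteratedDeriv (by norm_cast; simpa using hk) s).fun_pow 2
  have hE0 : E 0 = 0 := Finset.sum_eq_zero fun k hk => by simp [h0 k (Finset.mem_range.1 hk)]
  have hE_le : ∀ x > 0,
      ∑ k ∈ Finset.range 4, 2 * iteratedDeriv k η x * iteratedDeriv (k + 1) η x ≤ (2 + C) * E x :=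
    fun x hx =>
    calc _ = 2 * (iteratedDeriv 0 η x * iteratedDeriv 1 η x
            + iteratedDeriv 1 η x * iteratedDeriv 2 η x
            + iteratedDeriv 2 η x * iteratedDeriv 3 η x
            + iteratedDeriv 3 η x * (c₂ x * iteratedDeriv 2 η x + c₀ x * iteratedDeriv 0 η x)) := by
          simp only [Finset.sum_range_succ, Finset.sum_range_zero, hode x hx, iteratedDeriv_zero]
          ring
      _ ≤ (2 + (|c₀ x| + |c₂ x|)) * E x := by
          simpa only [E, Finset.sum_range_succ, Finset.sum_range_zero, zero_add]
            using two_mul_energy_le _ _ _ _ (c₀ x) (c₂ x)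
      _ ≤ (2 + C) * E x := by gcongr; exact hc x hx
  intro s hs
  have hEs : 0 ≤ -E s :=
    nonneg_of_hasDerivAt_of_mul_le (y := fun s => -E s) (c := 2 + C) (fun s => (hE s).neg) hs
      (by simp [hE0]) fun x hx => by linarith [hE_le x hx.1]
  have hηE : η s ^ 2 ≤ E s := by
    simpa using Finset.single_le_sum (fun k _ => sq_nonneg (iteratedDeriv k η s))
      (Finset.mem_range.2 (by norm_num : 0 < 4))
  exact pow_eq_zero_iff two_ne_zero |>.1 (by linarith [sq_nonneg (η s)])

structure IsCooperativeSolution (p q : ℝ) (a f f' g g' g'' : ℝ → ℝ) : Prop where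
  p_nonneg : 0 ≤ p
  q_nonneg : 0 ≤ q
  a_nonneg : ∀ s > 0, 0 ≤ a s
  hasDerivAt_f : ∀ s, HasDerivAt f (f' s) s
  hasDerivAt_f' : ∀ s, HasDerivAt f' (g s + q * f s) s
  hasDerivAt_g : ∀ s, HasDerivAt g (g' s) s
  hasDerivAt_g' : ∀ s, HasDerivAt g' (g'' s) s
  g''_eq : ∀ s > 0, g'' s = p * g s + a s * f s

namespace IsCooperativeSolution

variable {p q T : ℝ} {a f f' g g' g'' : ℝ → ℝ}

theorem nonneg_of_g'_nonneg (hS : IsCooperativeSolution p q a f f' g g' g'')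
    (hf0 : f 0 = 0) (hf'0 : f' 0 = 0) (hg0 : g 0 = 0) (hT : 0 ≤ T)
    (hg' : ∀ s ∈ Ico 0 T, 0 ≤ g' s) : 0 ≤ g T ∧ 0 ≤ f T := by
  have hg : ∀ s ∈ Icc 0 T, 0 ≤ g s := fun s hs =>
    le_of_hasDerivAt_le (fun _ => hasDerivAt_const _ 0) hS.hasDerivAt_g hs.1 hg0.ge
      fun x hx => hg' x ⟨hx.1.le, hx.2.trans_le hs.2⟩
  refine ⟨hg T ⟨hT, le_rfl⟩, ?_⟩
  exact nonneg_of_hasDerivAt_of_mul_le_secondDeriv hS.q_nonneg hS.hasDerivAt_f hS.hasDerivAt_f'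
    hT hf0 hf'0.ge fun x hx => le_add_of_nonneg_left (hg x ⟨hx.1.le, hx.2.le⟩)

theorem g'_zero_le_of_g'_nonneg (hS : IsCooperativeSolution p q a f f' g g' g'')
    (hf0 : f 0 = 0) (hf'0 : f' 0 = 0) (hg0 : g 0 = 0) (hT : 0 ≤ T)
    (hg' : ∀ s ∈ Ico 0 T, 0 ≤ g' s) : g' 0 ≤ g' T :=
  le_of_hasDerivAt_le (fun _ => hasDerivAt_const _ (g' 0)) hS.hasDerivAt_g' hT le_rfl
    fun x hx => by
      obtain ⟨hgx, hfx⟩ := hS.nonneg_of_g'_nonneg hf0 hf'0 hg0 hx.1.le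
        fun s hs => hg' s ⟨hs.1, hs.2.trans hx.2⟩
      rw [hS.g''_eq x hx.1]
      exact add_nonneg (mul_nonneg hS.p_nonneg hgx) (mul_nonneg (hS.a_nonneg x hx.1) hfx)

theorem g'_pos (hS : IsCooperativeSolution p q a f f' g g' g'')
    (hf0 : f 0 = 0) (hf'0 : f' 0 = 0) (hg0 : g 0 = 0) (hg'0 : 0 < g' 0) :
    ∀ s ≥ 0, 0 < g' s := by
  by_contra! hbad
  set bad := {s | 0 ≤ s ∧ g' s ≤ 0}
  have hcont : Continuous g' :=
    continuous_iff_continuousAt.2 fun s => (hS.hasDerivAt_g' s).continuousAt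
  have hbdd : BddBelow bad := ⟨0, fun s hs => hs.1⟩
  have hT : sInf bad ∈ bad :=
    (isClosed_Ici.inter (isClosed_le hcont continuous_const)).csInf_mem hbad hbdd
  have hbefore : ∀ s ∈ Ico 0 (sInf bad), 0 ≤ g' s := fun s hs =>
    le_of_lt (not_le.1 fun h => hs.2.not_ge (csInf_le hbdd ⟨hs.1, h⟩))
  linarith [hS.g'_zero_le_of_g'_nonneg hf0 hf'0 hg0 hT.1 hbefore, hT.2]

theorem cube_le (hS : IsCooperativeSolution p q a f f' g g' g'')
    (hf0 : f 0 = 0) (hf'0 : f' 0 = 0) (hg0 : g 0 = 0) (hg'0 : 0 < g' 0) :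
    ∀ s ≥ 0, g' 0 * s ^ 3 / 6 ≤ f s := by
  have hg'_nonneg : ∀ s ≥ 0, ∀ x ∈ Ico 0 s, 0 ≤ g' x := fun _ _ x hx =>
    (hS.g'_pos hf0 hf'0 hg0 hg'0 x hx.1).le
  have hg_ge : ∀ s ≥ 0, g' 0 * s ≤ g s := fun s hs =>
    le_of_hasDerivAt_le (fun x => (hasDerivAt_id' x).const_mul (g' 0)) hS.hasDerivAt_g hs
      (by simp [hg0]) fun x hx => by
        simpa using hS.g'_zero_le_of_g'_nonneg hf0 hf'0 hg0 hx.1.le (hg'_nonneg x hx.1.le)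
  have hf'_ge : ∀ s ≥ 0, g' 0 * s ^ 2 / 2 ≤ f' s := fun s hs =>
    le_of_hasDerivAt_le (fun x => ((hasDerivAt_pow 2 x).const_mul (g' 0)).div_const 2)
      hS.hasDerivAt_f' hs (by simp [hf'0]) fun x hx => by
        have hfx := (hS.nonneg_of_g'_nonneg hf0 hf'0 hg0 hx.1.le (hg'_nonneg x hx.1.le)).2
        nlinarith [hg_ge x hx.1.le, hS.q_nonneg]
  exact fun s hs =>
    le_of_hasDerivAt_le (fun x => ((hasDerivAt_pow 3 x).const_mul (g' 0)).div_const 6)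
      hS.hasDerivAt_f hs (by simp [hf0]) fun x hx => by
        nlinarith [hf'_ge x hx.1.le]

end IsCooperativeSolution

theorem iteratedDeriv_three_nonpos_of_memLp {A B : ℝ} {a η : ℝ → ℝ} (hAB : B ≤ A) (hB : 0 ≤ B)
    (ha : ∀ s, 0 ≤ a s) (hη : ContDiff ℝ 4 η) (hL2 : MemLp η 2 (volume.restrict (Ioi 0)))
    (hode : ∀ s, 0 < s →
      iteratedDeriv 4 η s - 2 * A * iteratedDeriv 2 η s + B ^ 2 * η s = a s * η s)
    (h0 : η 0 = 0) (h0' : deriv η 0 = 0) (h0'' : iteratedDeriv 2 η 0 = 0) :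
    iteratedDeriv 3 η 0 ≤ 0 := by
  by_contra! hγ
  obtain ⟨p, q, hp, hq, hpq_add, hpq_mul⟩ := exists_nonneg_add_eq_mul_eq hB hAB
  have hD : ∀ k < 4, ∀ s, HasDerivAt (iteratedDeriv k η) (iteratedDeriv (k + 1) η s) s :=
    fun k hk => hη.hasDerivAt_iteratedDeriv (by exact_mod_cast hk)
  have hS : IsCooperativeSolution p q a η (deriv η) (fun s => iteratedDeriv 2 η s - q * η s)
      (fun s => iteratedDeriv 3 η s - q * deriv η s)
      (fun s => iteratedDeriv 4 η s - q * iteratedDeriv 2 η s) :=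
    { p_nonneg := hp
      q_nonneg := hq
      a_nonneg := fun s _ => ha s
      hasDerivAt_f := fun s => by simpa using hD 0 (by norm_num) s
      hasDerivAt_f' := fun s => by simpa using hD 1 (by norm_num) s
      hasDerivAt_g := fun s => by
        simpa using (hD 2 (by norm_num) s).fun_sub ((hD 0 (by norm_num) s).const_mul q)
      hasDerivAt_g' := fun s => by
        simpa using (hD 3 (by norm_num) s).fun_sub ((hD 1 (by norm_num) s).const_mul q)
      g''_eq := fun s hs => by
        linear_combination hode s hs - iteratedDeriv 2 η s * hpq_add + η s * hpq_mul }
  have hcube := hS.cube_le h0 h0' (by simp [h0, h0'']) (by simpa [h0'] using hγ)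
  refine not_memLp_Ioi_of_eventually_le (by positivity : 0 < iteratedDeriv 3 η 0 / 6) ?_ 0
    two_ne_zero ENNReal.ofNat_ne_top hL2
  filter_upwards [eventually_ge_atTop 1] with s hs
  calc iteratedDeriv 3 η 0 / 6 ≤ iteratedDeriv 3 η 0 * s ^ 3 / 6 := by
        gcongr; exact le_mul_of_one_le_right hγ.le (one_le_pow₀ hs)
    _ ≤ η s := by simpa [h0'] using hcube s (by linarith)

theorem linear_fourth_order_uniqueness_general (A B : ℝ) (hAB : B ≤ A) (hB : 0 ≤ B)
    (a η : ℝ → ℝ)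
    (ha_bdd : ∃ M, ∀ s, |a s| ≤ M)
    (ha_nonneg : ∀ s, 0 ≤ a s)
    (hη : ContDiff ℝ 4 η)
    (hL2 : MemLp η 2 (volume.restrict (Set.Ioi (0 : ℝ))))
    (hode : ∀ s, 0 < s →
      iteratedDeriv 4 η s - 2 * A * iteratedDeriv 2 η s + B ^ 2 * η s = a s * η s)
    (h0 : η 0 = 0) (h0' : deriv η 0 = 0) (h0'' : iteratedDeriv 2 η 0 = 0) :
    ∀ s, 0 ≤ s → η s = 0 := by
  have hγ : iteratedDeriv 3 η 0 = 0 := by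
    refine le_antisymm
      (iteratedDeriv_three_nonpos_of_memLp hAB hB ha_nonneg hη hL2 hode h0 h0' h0'') ?_
    have := iteratedDeriv_three_nonpos_of_memLp (η := fun s => -η s) hAB hB ha_nonneg hη.neg
      hL2.neg (fun s hs => by simp only [iteratedDeriv_fun_neg]; linear_combination -hode s hs)
      (by simp [h0]) (by simp [h0']) (by simp [h0''])
    simpa using this
  obtain ⟨M, hM⟩ := ha_bdd
  refine eq_zero_of_iteratedDeriv_four_eq (c₀ := fun s => a s - B ^ 2) (c₂ := fun _ => 2 * A)
    (C := M + B ^ 2 + |2 * A|) hη (fun s _ => ?_) (fun s hs => by linear_combination hode s hs) ?_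
  · linarith [abs_sub (a s) (B ^ 2), hM s, abs_of_nonneg (sq_nonneg B)]
  · intro k hk
    interval_cases k <;> simpa

/-- Uniqueness lemma for a linear fourth-order ODE on `ℝ₊ = (0,∞)`:
if `A ≥ B ≥ 0`, `a ∈ L^∞` with `a ≥ 0`, and `η ∈ H²(ℝ₊)` solves
`η'''' - 2A η'' + B² η = a η` with `η(0) = η'(0) = η''(0) = 0`, then `η ≡ 0` on `ℝ₊`. -/
theorem linear_fourth_order_uniqueness (A B : ℝ) (hAB : B ≤ A) (hB : 0 ≤ B)
    (a η : ℝ → ℝ)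
    (ha_meas : Measurable a) (ha_bdd : ∃ M, ∀ s, |a s| ≤ M)
    (ha_nonneg : ∀ s, 0 ≤ a s)
    (hη : ContDiff ℝ 4 η)
    (hL2 : MemLp η 2 (volume.restrict (Set.Ioi (0 : ℝ))))
    (hL2' : MemLp (deriv η) 2 (volume.restrict (Set.Ioi (0 : ℝ))))
    (hL2'' : MemLp (iteratedDeriv 2 η) 2 (volume.restrict (Set.Ioi (0 : ℝ))))
    (hode : ∀ s, 0 < s →
      iteratedDeriv 4 η s - 2 * A * iteratedDeriv 2 η s + B ^ 2 * η s = a s * η s)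
    (h0 : η 0 = 0) (h0' : deriv η 0 = 0) (h0'' : iteratedDeriv 2 η 0 = 0) :
    ∀ s, 0 ≤ s → η s = 0 :=
  linear_fourth_order_uniqueness_general A B hAB hB a η ha_bdd ha_nonneg hη hL2 hode h0 h0' h0''
end

section
/- Let q > 2 and A, B > 0 satisfy A/B = (q² + 4)/(4q). Then the function w(s) = C (cosh(νs))^{−4/(q−2)}, with ν² = ((q−2)²/(2(q²+4))) A and C^{q−2} = (2q(q+2)(3q−2)/(q²+4)²) A², is a solution of w'''' − 2A w'' + B² w = |w|^{q−2} w on ℝ. -/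
/-!
For `g_β(s) = cosh (ν s) ^ β` one has `g_β'' = ν² (β² g_β - β (β - 1) g_{β-2})`, so the
operator `w'''' - 2 A w'' + B² w` maps `g_β` into the span of `g_β`, `g_{β-2}`, `g_{β-4}`. For
`β = -4/(q-2)` the nonlinearity `|C g_β|^{q-2} C g_β` is a multiple of `g_{β-4}`; the choice of
`ν²` and the relation between `A` and `B` kill the coefficients of `g_β` and `g_{β-2}`, and
`C^{q-2}` matches the coefficient of `g_{β-4}`.
-/

theorem eq_mul_div_of_div_eq_div {K : Type*} [Field K] {a b c d : K} (hc : c ≠ 0) (hd : d ≠ 0)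
    (h : a / b = c / d) : b = d * a / c := by
  have hb : b ≠ 0 := by
    rintro rfl
    simp [hc, hd, eq_comm] at h
  field_simp at h ⊢
  linear_combination -h

namespace Real

variable (ν : ℝ)

theorem hasDerivAt_cosh_mul_rpow (β x : ℝ) :
    HasDerivAt (fun x => cosh (ν * x) ^ β)
      (β * ν * (sinh (ν * x) * cosh (ν * x) ^ (β - 1))) x := by
  have h := (((hasDerivAt_id' x).const_mul ν).cosh).rpow_const (p := β)
    (Or.inl (cosh_pos _).ne')
  convert h using 1
  ring

theorem hasDerivAt_sinh_mul_mul_cosh_mul_rpow (β x : ℝ) :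
    HasDerivAt (fun x => sinh (ν * x) * cosh (ν * x) ^ β)
      (ν * ((β + 1) * cosh (ν * x) ^ (β + 1) - β * cosh (ν * x) ^ (β - 1))) x := by
  have hc := (cosh_pos (ν * x)).ne'
  have h := ((hasDerivAt_id' x).const_mul ν).sinh.mul (hasDerivAt_cosh_mul_rpow ν β x)
  refine h.congr_deriv ?_
  have hβ : cosh (ν * x) ^ β = cosh (ν * x) ^ (β - 1) * cosh (ν * x) := by
    rw [← rpow_add_one hc, sub_add_cancel]
  rw [rpow_add_one hc, hβ]
  linear_combination β * ν * cosh (ν * x) ^ (β - 1) * sinh_sq (ν * x)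

theorem contDiff_cosh_mul_rpow {n : WithTop ℕ∞} (β : ℝ) :
    ContDiff ℝ n (fun x => cosh (ν * x) ^ β) :=
  (contDiff_cosh.comp (contDiff_const.mul contDiff_id)).rpow_const_of_ne
    fun _ => (cosh_pos _).ne'

theorem iteratedDeriv_two_cosh_mul_rpow (β : ℝ) :
    iteratedDeriv 2 (fun x => cosh (ν * x) ^ β) = fun x =>
      ν ^ 2 * (β ^ 2 * cosh (ν * x) ^ β - β * (β - 1) * cosh (ν * x) ^ (β - 2)) := by
  rw [iteratedDeriv_succ, iteratedDeriv_one]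
  funext x
  have h := (hasDerivAt_sinh_mul_mul_cosh_mul_rpow ν (β - 1) x).const_mul (β * ν)
  rw [funext fun x => (hasDerivAt_cosh_mul_rpow ν β x).deriv, h.deriv, sub_add_cancel,
    sub_sub, one_add_one_eq_two]
  ring

theorem iteratedDeriv_four_cosh_mul_rpow (β : ℝ) :
    iteratedDeriv 4 (fun x => cosh (ν * x) ^ β) = fun x =>
      ν ^ 4 * (β ^ 4 * cosh (ν * x) ^ β
        - β * (β - 1) * (β ^ 2 + (β - 2) ^ 2) * cosh (ν * x) ^ (β - 2)
        + β * (β - 1) * (β - 2) * (β - 3) * cosh (ν * x) ^ (β - 4)) := by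
  funext x
  rw [iteratedDeriv_eq_iterate, show 4 = 2 + 2 from rfl, Function.iterate_add_apply,
    ← iteratedDeriv_eq_iterate, ← iteratedDeriv_eq_iterate, iteratedDeriv_two_cosh_mul_rpow,
    iteratedDeriv_const_mul_field, iteratedDeriv_fun_sub
      (contDiffAt_const.mul (contDiff_cosh_mul_rpow ν β).contDiffAt)
      (contDiffAt_const.mul (contDiff_cosh_mul_rpow ν _).contDiffAt),
    iteratedDeriv_const_mul_field, iteratedDeriv_const_mul_field,
    iteratedDeriv_two_cosh_mul_rpow, iteratedDeriv_two_cosh_mul_rpow]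
  simp only
  rw [show β - 2 - 2 = β - 4 by ring]
  ring

theorem cosh_mul_rpow_solves_ode {q A B β C : ℝ} (hC : 0 < C) (hβ : β * (q - 2) = -4)
    (h₀ : ν ^ 4 * β ^ 4 - 2 * A * (ν ^ 2 * β ^ 2) + B ^ 2 = 0)
    (h₂ : ν ^ 2 * (β ^ 2 + (β - 2) ^ 2) = 2 * A)
    (h₄ : ν ^ 4 * (β * (β - 1) * (β - 2) * (β - 3)) = C ^ (q - 2)) (s : ℝ) :
    iteratedDeriv 4 (fun s => C * cosh (ν * s) ^ β) s
        - 2 * A * iteratedDeriv 2 (fun s => C * cosh (ν * s) ^ β) s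
        + B ^ 2 * (C * cosh (ν * s) ^ β)
      = |C * cosh (ν * s) ^ β| ^ (q - 2) * (C * cosh (ν * s) ^ β) := by
  have hc := cosh_pos (ν * s)
  have hw : |C * cosh (ν * s) ^ β| ^ (q - 2) * (C * cosh (ν * s) ^ β)
      = C ^ (q - 2) * C * cosh (ν * s) ^ (β - 4) := by
    rw [abs_of_pos (by positivity), mul_rpow hC.le (rpow_nonneg hc.le _), ← rpow_mul hc.le, hβ,
      sub_eq_add_neg β, rpow_add hc]
    ring
  rw [iteratedDeriv_const_mul_field, iteratedDeriv_const_mul_field,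
    iteratedDeriv_four_cosh_mul_rpow, iteratedDeriv_two_cosh_mul_rpow, hw]
  linear_combination C * cosh (ν * s) ^ β * h₀
    - C * ν ^ 2 * β * (β - 1) * cosh (ν * s) ^ (β - 2) * h₂
    + C * cosh (ν * s) ^ (β - 4) * h₄

end Real

theorem explicit_solution_general (q A B ν C : ℝ) (hq : 2 < q)
    (hAB : A / B = (q ^ 2 + 4) / (4 * q))
    (hν2 : ν ^ 2 = (q - 2) ^ 2 / (2 * (q ^ 2 + 4)) * A)
    (hC : 0 < C) (hCq : C ^ (q - 2) = 2 * q * (q + 2) * (3 * q - 2) / (q ^ 2 + 4) ^ 2 * A ^ 2) :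
    ∀ s : ℝ,
      iteratedDeriv 4 (fun s => C * Real.cosh (ν * s) ^ (-(4 / (q - 2)))) s
        - 2 * A * iteratedDeriv 2 (fun s => C * Real.cosh (ν * s) ^ (-(4 / (q - 2)))) s
        + B ^ 2 * (C * Real.cosh (ν * s) ^ (-(4 / (q - 2))))
      = |C * Real.cosh (ν * s) ^ (-(4 / (q - 2)))| ^ (q - 2)
          * (C * Real.cosh (ν * s) ^ (-(4 / (q - 2)))) := by
  have hq₂ : q - 2 ≠ 0 := by linarith
  have hB : B = 4 * q * A / (q ^ 2 + 4) :=
    eq_mul_div_of_div_eq_div (by positivity) (by positivity) hAB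
  have hν4 : ν ^ 4 = (ν ^ 2) ^ 2 := by ring
  refine Real.cosh_mul_rpow_solves_ode ν hC (by field_simp) ?_ ?_ ?_
  · rw [hν4, hν2, hB]; field_simp; ring
  · rw [hν2]; field_simp; ring
  · rw [hCq, hν4, hν2]; field_simp; ring

/-- Explicit homoclinic solution: if `q > 2`, `A, B > 0` with `A/B = (q²+4)/(4q)`,
then `w(s) = C (cosh νs)^{-4/(q-2)}`, with `ν² = ((q-2)²/(2(q²+4))) A` and
`C^{q-2} = (2q(q+2)(3q-2)/(q²+4)²) A²`, solves `w'''' − 2A w'' + B² w = |w|^{q−2} w` on `ℝ`. -/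
theorem explicit_solution (q A B ν C : ℝ) (hq : 2 < q) (hA : 0 < A) (hB : 0 < B)
    (hAB : A / B = (q ^ 2 + 4) / (4 * q))
    (hν : 0 < ν) (hν2 : ν ^ 2 = (q - 2) ^ 2 / (2 * (q ^ 2 + 4)) * A)
    (hC : 0 < C) (hCq : C ^ (q - 2) = 2 * q * (q + 2) * (3 * q - 2) / (q ^ 2 + 4) ^ 2 * A ^ 2) :
    ∀ s : ℝ,
      iteratedDeriv 4 (fun s => C * Real.cosh (ν * s) ^ (-(4 / (q - 2)))) s
        - 2 * A * iteratedDeriv 2 (fun s => C * Real.cosh (ν * s) ^ (-(4 / (q - 2)))) s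
        + B ^ 2 * (C * Real.cosh (ν * s) ^ (-(4 / (q - 2))))
      = |C * Real.cosh (ν * s) ^ (-(4 / (q - 2)))| ^ (q - 2)
          * (C * Real.cosh (ν * s) ^ (-(4 / (q - 2)))) :=
  explicit_solution_general q A B ν C hq hAB hν2 hC hCq
end
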